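/- Let n ∈ ℕ, 1 ≤ q < ∞ and ε ≥ 0. If 1 − ε^q Σ_{k=1}^{n} 1/t_k^q ≥ 0 set m = n; otherwise choose m ∈ {0,1,…,n} such that 1 − ε^q Σ_{k=1}^{m} 1/t_k^q ≥ 0 and 1 − ε^q Σ_{k=1}^{m+1} 1/t_k^q < 0. Then E(W^T_q, I^n_{ε,∞}) = E(W^T_q, I^n_{ε,∞}, Φ*_m) = ( t_{m+1}^q + ε^q Σ_{k=1}^{m} (1 − t_{m+1}^q/t_k^q) )^{1/q}. -/

import Mathlib

open scoped ENNReal NNReal BigOperators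

/-- The `ℓ_q` (quasi-)norm `(∑ |x_k|^q)^{1/q}` of a complex sequence, valued in `ℝ≥0∞`. -/
noncomputable def lqNorm (q : ℝ) (x : ℕ → ℂ) : ℝ≥0∞ :=
  (∑' k, (‖x k‖₊ : ℝ≥0∞) ^ q) ^ (1 / q)

/-- The class `W^T_q = {Th : h ∈ ℓ_q, ‖h‖_q ≤ 1}`, where `T` is the diagonal operator
determined by the sequence `t` (0-based indexing: `t k` is the paper's `t_{k+1}`). -/
def WT (q : ℝ) (t : ℕ → ℝ) : Set (ℕ → ℂ) :=
  {x | ∃ h : ℕ → ℂ, (∀ k, x k = (t k : ℂ) * h k) ∧ lqNorm q h ≤ 1}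

/-- The error `E(W, I, Φ) = sup_{x ∈ W} sup_{a ∈ I x} ‖x - Φ a‖_q` of a recovery
method `Φ`, measured in `ℓ_q`. -/
noncomputable def recErr {Z : Type*} (q : ℝ) (W : Set (ℕ → ℂ))
    (I : (ℕ → ℂ) → Set Z) (Φ : Z → ℕ → ℂ) : ℝ≥0∞ :=
  ⨆ x ∈ W, ⨆ a ∈ I x, lqNorm q (fun k => x k - Φ a k)

/-- The error of optimal recovery `E(W, I) = inf_Φ E(W, I, Φ)`. -/
noncomputable def optErr {Z : Type*} (q : ℝ) (W : Set (ℕ → ℂ))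
    (I : (ℕ → ℂ) → Set Z) : ℝ≥0∞ :=
  ⨅ Φ : Z → ℕ → ℂ, recErr q W I Φ

/-- The method `Φ*_m(a) = (a_1(1 − t_{m+1}^q/t_1^q), …, a_m(1 − t_{m+1}^q/t_m^q), 0, …)`
for information consisting of the first `n` coordinates (0-based: `t m` is the paper's
`t_{m+1}`); `PhiStar q t n 0` is the zero method `Φ*_0`. -/
noncomputable def PhiStar (q : ℝ) (t : ℕ → ℝ) (n m : ℕ) (a : Fin n → ℂ) : ℕ → ℂ :=
  fun k => if h : k < n ∧ k < m then ((1 - t m ^ q / t k ^ q : ℝ) : ℂ) * a ⟨k, h.1⟩ else 0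

/-- The information mapping `I^n_{ε,∞}(x) = {a ∈ ℂⁿ : max_{1≤k≤n} |x_k − a_k| ≤ ε}`. -/
def infoSup (n : ℕ) (ε : ℝ) (x : ℕ → ℂ) : Set (Fin n → ℂ) :=
  {a | ∀ k : Fin n, ‖x (k : ℕ) - a k‖ ≤ ε}

/-!
In the paper's indexing, put `c_k = t_{m+1}^q / t_k^q ∈ [0, 1]`. For `x = T h` and admissible
`a`, the error of `Φ*_m` at a coordinate `k ≤ m` is `c_k x_k - (1 - c_k)(a_k - x_k)`, so by
convexity of `s ↦ s^q` its `q`-th power is at most `t_{m+1}^q |h_k|^q + (1 - c_k) ε^q`; beyond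
`m` it is `|x_k|^q ≤ t_{m+1}^q |h_k|^q`. Summing with `‖h‖_q ≤ 1` gives the upper bound.

Conversely, if `x` and `-x` both lie in `W^T_q` and share an information value `a`, then for any
method `2 ‖x‖_q^q ≤ ‖x - Φ a‖_q^q + ‖-x - Φ a‖_q^q`, again by convexity. The extremal `x` has
`x_k = ε` for `k ≤ m`, then `x_{m+1} = t_{m+1} (1 - ε^q ∑_{k ≤ m} t_k^{-q})^{1/q}` (so that
`‖h‖_q = 1`), and zeros; `a = 0` is admissible for `±x` since, when `m < n`, the choice of `m`
says exactly that `|x_{m+1}| ≤ ε`. Its norm `‖x‖_q` is the claimed error.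
-/

open Finset

section Norms

variable {q : ℝ}

lemma coe_nnnorm_rpow_eq_ofReal (hq : 0 ≤ q) (z : ℂ) :
    (‖z‖₊ : ℝ≥0∞) ^ q = ENNReal.ofReal (‖z‖ ^ q) := by
  rw [← ENNReal.ofReal_coe_nnreal, coe_nnnorm, ← ENNReal.ofReal_rpow_of_nonneg (norm_nonneg z) hq]

lemma lqNorm_eq_tsum_ofReal (hq : 0 ≤ q) (x : ℕ → ℂ) :
    lqNorm q x = (∑' k, ENNReal.ofReal (‖x k‖ ^ q)) ^ (1 / q) := by
  simp only [lqNorm, coe_nnnorm_rpow_eq_ofReal hq]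

lemma lqNorm_rpow (hq : 0 < q) (x : ℕ → ℂ) :
    lqNorm q x ^ q = ∑' k, ENNReal.ofReal (‖x k‖ ^ q) := by
  rw [lqNorm_eq_tsum_ofReal hq.le, ← ENNReal.rpow_mul, one_div_mul_cancel hq.ne', ENNReal.rpow_one]

lemma lqNorm_le_ofReal_rpow (hq : 0 < q) {x : ℕ → ℂ} {V : ℝ} (hV : 0 ≤ V)
    (h : ∑' k, ENNReal.ofReal (‖x k‖ ^ q) ≤ ENNReal.ofReal V) :
    lqNorm q x ≤ ENNReal.ofReal (V ^ (1 / q)) := by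
  rw [lqNorm_eq_tsum_ofReal hq.le, ← ENNReal.ofReal_rpow_of_nonneg hV (by positivity)]
  gcongr

lemma lqNorm_eq_ofReal_rpow (hq : 0 < q) {x : ℕ → ℂ} {V : ℝ} (hV : 0 ≤ V)
    (h : ∑' k, ENNReal.ofReal (‖x k‖ ^ q) = ENNReal.ofReal V) :
    lqNorm q x = ENNReal.ofReal (V ^ (1 / q)) := by
  rw [lqNorm_eq_tsum_ofReal hq.le, h, ENNReal.ofReal_rpow_of_nonneg hV (by positivity)]

lemma lqNorm_neg (x : ℕ → ℂ) : lqNorm q (-x) = lqNorm q x := by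
  simp only [lqNorm, Pi.neg_apply, nnnorm_neg]

lemma tsum_ofReal_eq_sum {ι : Type*} {f : ι → ℝ} {s : Finset ι} (hf : ∀ k ∈ s, 0 ≤ f k)
    (hs : ∀ k ∉ s, f k = 0) :
    ∑' k, ENNReal.ofReal (f k) = ENNReal.ofReal (∑ k ∈ s, f k) := by
  rw [tsum_eq_sum fun k hk => by rw [hs k hk, ENNReal.ofReal_zero],
    ENNReal.ofReal_sum_of_nonneg hf]

end Norms

section Convexity

variable {E : Type*} [SeminormedAddCommGroup E] [NormedSpace ℝ E] {q : ℝ}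

lemma norm_sub_smul_rpow_le (hq : 1 ≤ q) {c ε : ℝ} (hc0 : 0 ≤ c) (hc1 : c ≤ 1) {u a : E}
    (ha : ‖u - a‖ ≤ ε) :
    ‖u - (1 - c) • a‖ ^ q ≤ c * ‖u‖ ^ q + (1 - c) * ε ^ q := by
  have hε : 0 ≤ ε := (norm_nonneg _).trans ha
  have hnorm : ‖u - (1 - c) • a‖ ≤ c * ‖u‖ + (1 - c) * ε := calc
    ‖u - (1 - c) • a‖ = ‖c • u + (1 - c) • (u - a)‖ := by congr 1; module
    _ ≤ c * ‖u‖ + (1 - c) * ε := by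
      refine (norm_add_le _ _).trans ?_
      rw [norm_smul, norm_smul, Real.norm_of_nonneg hc0, Real.norm_of_nonneg (sub_nonneg.2 hc1)]
      gcongr
  calc ‖u - (1 - c) • a‖ ^ q ≤ (c * ‖u‖ + (1 - c) * ε) ^ q := by gcongr
    _ ≤ c * ‖u‖ ^ q + (1 - c) * ε ^ q :=
      (convexOn_rpow hq).2 (norm_nonneg u) hε hc0 (sub_nonneg.2 hc1) (by ring)

lemma two_mul_norm_rpow_le (hq : 1 ≤ q) (u v : E) :
    2 * ‖u‖ ^ q ≤ ‖u - v‖ ^ q + ‖-u - v‖ ^ q := by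
  have hnorm : ‖u‖ ≤ 2⁻¹ * ‖u - v‖ + 2⁻¹ * ‖-u - v‖ := by
    have h := norm_sub_le (u - v) (-u - v)
    rw [show u - v - (-u - v) = (2 : ℝ) • u by module, norm_smul, Real.norm_two] at h
    linarith
  calc 2 * ‖u‖ ^ q ≤ 2 * (2⁻¹ * ‖u - v‖ + 2⁻¹ * ‖-u - v‖) ^ q := by gcongr
    _ ≤ 2 * (2⁻¹ * ‖u - v‖ ^ q + 2⁻¹ * ‖-u - v‖ ^ q) := by
      gcongr
      exact (convexOn_rpow hq).2 (norm_nonneg _) (norm_nonneg _) (by norm_num) (by norm_num)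
        (by norm_num)
    _ = ‖u - v‖ ^ q + ‖-u - v‖ ^ q := by ring

end Convexity

section Recovery

variable {q : ℝ}

lemma two_mul_lqNorm_rpow_le (hq : 1 ≤ q) (x y : ℕ → ℂ) :
    2 * lqNorm q x ^ q ≤ lqNorm q (x - y) ^ q + lqNorm q (-x - y) ^ q := by
  have hq0 : 0 < q := one_pos.trans_le hq
  simp only [lqNorm_rpow hq0, ← ENNReal.tsum_mul_left, ← ENNReal.tsum_add]
  refine ENNReal.tsum_le_tsum fun k => ?_
  rw [← ENNReal.ofReal_ofNat 2, ← ENNReal.ofReal_mul zero_le_two,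
    ← ENNReal.ofReal_add (by positivity) (by positivity)]
  exact ENNReal.ofReal_le_ofReal (two_mul_norm_rpow_le hq (x k) (y k))

lemma lqNorm_le_recErr {Z : Type*} (hq : 1 ≤ q) {W : Set (ℕ → ℂ)} {I : (ℕ → ℂ) → Set Z}
    {x : ℕ → ℂ} {a : Z} (hx : x ∈ W) (hnx : -x ∈ W) (ha : a ∈ I x) (hna : a ∈ I (-x))
    (Φ : Z → ℕ → ℂ) :
    lqNorm q x ≤ recErr q W I Φ := by
  have hq0 : 0 < q := one_pos.trans_le hq
  have herr : ∀ z ∈ W, a ∈ I z → lqNorm q (z - Φ a) ^ q ≤ recErr q W I Φ ^ q :=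
    fun z hz hza => ENNReal.rpow_le_rpow (le_iSup₂_of_le z hz (le_iSup₂_of_le a hza le_rfl)) hq0.le
  have h2 : 2 * lqNorm q x ^ q ≤ 2 * recErr q W I Φ ^ q := calc
    _ ≤ _ := two_mul_lqNorm_rpow_le hq x (Φ a)
    _ ≤ _ := add_le_add (herr x hx ha) (herr _ hnx hna)
    _ = _ := (two_mul _).symm
  rwa [ENNReal.mul_le_mul_iff_right two_ne_zero ENNReal.ofNat_ne_top,
    ENNReal.rpow_le_rpow_iff hq0] at h2

lemma optErr_eq_recErr_of_le {Z : Type*} {W : Set (ℕ → ℂ)} {I : (ℕ → ℂ) → Set Z}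
    {Φ₀ : Z → ℕ → ℂ} {C : ℝ≥0∞} (hup : recErr q W I Φ₀ ≤ C)
    (hlow : ∀ Φ, C ≤ recErr q W I Φ) :
    optErr q W I = recErr q W I Φ₀ ∧ recErr q W I Φ₀ = C :=
  have hΦ₀ : recErr q W I Φ₀ = C := le_antisymm hup (hlow Φ₀)
  ⟨le_antisymm (iInf_le _ Φ₀) (hΦ₀ ▸ le_iInf hlow), hΦ₀⟩

end Recovery

section Diagonal

variable {q ε : ℝ} {t : ℕ → ℝ} {n m : ℕ}

lemma neg_mem_WT {x : ℕ → ℂ} (hx : x ∈ WT q t) : -x ∈ WT q t := by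
  obtain ⟨h, hxh, hh⟩ := hx
  exact ⟨-h, fun k => by simp [hxh k], (lqNorm_neg h).trans_le hh⟩

lemma zero_mem_infoSup {x : ℕ → ℂ} (hx : ∀ k < n, ‖x k‖ ≤ ε) : 0 ∈ infoSup n ε x :=
  fun k => by simpa using hx k k.isLt

lemma norm_sub_PhiStar_rpow_le (hq : 1 ≤ q) (htpos : ∀ k, 0 < t k) (htmono : Antitone t)
    (hmn : m ≤ n) {h x : ℕ → ℂ} (hxh : ∀ k, x k = t k * h k) {a : Fin n → ℂ}
    (ha : a ∈ infoSup n ε x) (k : ℕ) :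
    ‖x k - PhiStar q t n m a k‖ ^ q ≤
      t m ^ q * ‖h k‖ ^ q + if k < m then (1 - t m ^ q / t k ^ q) * ε ^ q else 0 := by
  have hq0 : 0 < q := one_pos.trans_le hq
  have hnorm : ‖x k‖ ^ q = t k ^ q * ‖h k‖ ^ q := by
    rw [hxh, norm_mul, Complex.norm_real, Real.norm_of_nonneg (htpos k).le,
      Real.mul_rpow (htpos k).le (norm_nonneg _)]
  have htk : 0 < t k ^ q := Real.rpow_pos_of_pos (htpos k) q
  by_cases hkm : k < m
  · have hkn : k < n := hkm.trans_le hmn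
    have hc1 : t m ^ q / t k ^ q ≤ 1 :=
      div_le_one_of_le₀ (Real.rpow_le_rpow (htpos m).le (htmono hkm.le) hq0.le) htk.le
    have hPhi : PhiStar q t n m a k = (1 - t m ^ q / t k ^ q) • a ⟨k, hkn⟩ := by
      simp [PhiStar, hkn, hkm, Complex.real_smul]
    rw [hPhi, if_pos hkm]
    calc _ ≤ t m ^ q / t k ^ q * ‖x k‖ ^ q + (1 - t m ^ q / t k ^ q) * ε ^ q :=
          norm_sub_smul_rpow_le hq (div_nonneg (Real.rpow_nonneg (htpos m).le q) htk.le) hc1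
            (ha ⟨k, hkn⟩)
      _ = _ := by rw [hnorm]; field_simp
  · have hPhi : PhiStar q t n m a k = 0 := by simp [PhiStar, hkm]
    rw [hPhi, sub_zero, if_neg hkm, add_zero, hnorm]
    exact mul_le_mul_of_nonneg_right
      (Real.rpow_le_rpow (htpos k).le (htmono (not_lt.1 hkm)) hq0.le) (by positivity)

lemma recErr_PhiStar_le (hq : 1 ≤ q) (htpos : ∀ k, 0 < t k) (htmono : Antitone t) (hε : 0 ≤ ε)
    (hmn : m ≤ n) :
    recErr q (WT q t) (infoSup n ε) (PhiStar q t n m) ≤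
      ENNReal.ofReal ((t m ^ q + ε ^ q * ∑ k ∈ range m, (1 - t m ^ q / t k ^ q)) ^ (1 / q)) := by
  have hq0 : 0 < q := one_pos.trans_le hq
  have hc1 : ∀ k ∈ range m, 0 ≤ 1 - t m ^ q / t k ^ q := fun k hk =>
    sub_nonneg.2 (div_le_one_of_le₀
      (Real.rpow_le_rpow (htpos m).le (htmono (mem_range.1 hk).le) hq0.le)
      (Real.rpow_nonneg (htpos k).le q))
  have hc : ∀ k ∈ range m, 0 ≤ (1 - t m ^ q / t k ^ q) * ε ^ q := fun k hk =>
    mul_nonneg (hc1 k hk) (Real.rpow_nonneg hε q)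
  have htm : 0 ≤ t m ^ q := Real.rpow_nonneg (htpos m).le q
  refine iSup₂_le fun x ⟨h, hxh, hh⟩ => iSup₂_le fun a ha => ?_
  have hh1 : ∑' k, ENNReal.ofReal (‖h k‖ ^ q) ≤ 1 := by
    rw [← lqNorm_rpow hq0, ← ENNReal.one_rpow q]
    gcongr
  refine lqNorm_le_ofReal_rpow hq0
    (add_nonneg htm (mul_nonneg (Real.rpow_nonneg hε q) (sum_nonneg hc1))) ?_
  have hfirst : ∑' k, ENNReal.ofReal (if k < m then (1 - t m ^ q / t k ^ q) * ε ^ q else 0) =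
      ENNReal.ofReal (∑ k ∈ range m, (1 - t m ^ q / t k ^ q) * ε ^ q) := by
    rw [tsum_ofReal_eq_sum (s := range m) (fun k hk => by simpa [mem_range.1 hk] using hc k hk)
      (by simp +contextual [mem_range])]
    exact congrArg _ (sum_congr rfl fun k hk => if_pos (mem_range.1 hk))
  calc ∑' k, ENNReal.ofReal (‖x k - PhiStar q t n m a k‖ ^ q)
      ≤ ∑' k, (ENNReal.ofReal (t m ^ q) * ENNReal.ofReal (‖h k‖ ^ q) +
          ENNReal.ofReal (if k < m then (1 - t m ^ q / t k ^ q) * ε ^ q else 0)) := by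
        refine ENNReal.tsum_le_tsum fun k => ?_
        rw [← ENNReal.ofReal_mul htm]
        exact (ENNReal.ofReal_le_ofReal
          (norm_sub_PhiStar_rpow_le hq htpos htmono hmn hxh ha k)).trans ENNReal.ofReal_add_le
    _ = ENNReal.ofReal (t m ^ q) * ∑' k, ENNReal.ofReal (‖h k‖ ^ q) +
          ENNReal.ofReal (∑ k ∈ range m, (1 - t m ^ q / t k ^ q) * ε ^ q) := by
        rw [ENNReal.tsum_add, ENNReal.tsum_mul_left, hfirst]
    _ ≤ ENNReal.ofReal (t m ^ q) * 1 +
          ENNReal.ofReal (∑ k ∈ range m, (1 - t m ^ q / t k ^ q) * ε ^ q) := by gcongr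
    _ = _ := by
        rw [mul_one, ← ENNReal.ofReal_add htm (sum_nonneg hc), ← sum_mul, mul_comm (∑ k ∈ _, _)]

end Diagonal

section WorstCase

variable {q ε : ℝ} {t : ℕ → ℝ} {n m : ℕ}

noncomputable def worstCoeff (q ε : ℝ) (t : ℕ → ℝ) (m k : ℕ) : ℝ :=
  if k < m then ε / t k
  else if k = m then (1 - ε ^ q * ∑ j ∈ range m, 1 / t j ^ q) ^ (1 / q) else 0

noncomputable def worstCase (q ε : ℝ) (t : ℕ → ℝ) (m : ℕ) : ℕ → ℂ :=
  fun k => ((t k * worstCoeff q ε t m k : ℝ) : ℂ)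

lemma worstCoeff_of_lt {k : ℕ} (hk : k < m) : worstCoeff q ε t m k = ε / t k := if_pos hk

lemma worstCoeff_eq_zero {k : ℕ} (hk : m < k) : worstCoeff q ε t m k = 0 := by
  simp [worstCoeff, hk.not_gt, hk.ne']

lemma worstCoeff_self_rpow (hq : q ≠ 0) (hS : 0 ≤ 1 - ε ^ q * ∑ k ∈ range m, 1 / t k ^ q) :
    worstCoeff q ε t m m ^ q = 1 - ε ^ q * ∑ k ∈ range m, 1 / t k ^ q := by
  rw [worstCoeff, if_neg (lt_irrefl m), if_pos rfl, ← Real.rpow_mul hS, one_div_mul_cancel hq,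
    Real.rpow_one]

lemma worstCoeff_nonneg (hε : 0 ≤ ε) (htpos : ∀ k, 0 < t k)
    (hS : 0 ≤ 1 - ε ^ q * ∑ k ∈ range m, 1 / t k ^ q) (k : ℕ) : 0 ≤ worstCoeff q ε t m k := by
  unfold worstCoeff
  split_ifs
  exacts [div_nonneg hε (htpos k).le, Real.rpow_nonneg hS _, le_rfl]

lemma sum_worstCoeff_rpow (hq : q ≠ 0) (hε : 0 ≤ ε) (htpos : ∀ k, 0 < t k)
    (hS : 0 ≤ 1 - ε ^ q * ∑ k ∈ range m, 1 / t k ^ q) :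
    ∑ k ∈ range (m + 1), worstCoeff q ε t m k ^ q = 1 := by
  have hlow : ∀ k ∈ range m, worstCoeff q ε t m k ^ q = ε ^ q * (1 / t k ^ q) := fun k hk => by
    rw [worstCoeff_of_lt (mem_range.1 hk), Real.div_rpow hε (htpos k).le, mul_one_div]
  rw [sum_range_succ, sum_congr rfl hlow, ← mul_sum, worstCoeff_self_rpow hq hS]
  ring

lemma sum_mul_worstCoeff_rpow (hq : q ≠ 0) (hε : 0 ≤ ε) (htpos : ∀ k, 0 < t k)
    (hS : 0 ≤ 1 - ε ^ q * ∑ k ∈ range m, 1 / t k ^ q) :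
    ∑ k ∈ range (m + 1), (t k * worstCoeff q ε t m k) ^ q =
      t m ^ q + ε ^ q * ∑ k ∈ range m, (1 - t m ^ q / t k ^ q) := by
  have hlow : ∀ k ∈ range m, (t k * worstCoeff q ε t m k) ^ q = ε ^ q := fun k hk => by
    rw [worstCoeff_of_lt (mem_range.1 hk), mul_div_cancel₀ _ (htpos k).ne']
  have hsplit : ∑ k ∈ range m, (1 - t m ^ q / t k ^ q) =
      m - t m ^ q * ∑ k ∈ range m, 1 / t k ^ q := by
    simp only [sum_sub_distrib, sum_const, card_range, nsmul_eq_mul, mul_one, mul_sum,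
      mul_one_div]
  rw [sum_range_succ, sum_congr rfl hlow, sum_const, card_range, nsmul_eq_mul,
    Real.mul_rpow (htpos m).le (worstCoeff_nonneg hε htpos hS m), worstCoeff_self_rpow hq hS,
    hsplit]
  ring

lemma mul_worstCoeff_le (hq : 0 < q) (hε : 0 ≤ ε) (htpos : ∀ k, 0 < t k)
    (hS : 0 ≤ 1 - ε ^ q * ∑ k ∈ range m, 1 / t k ^ q)
    (hnext : m < n → 1 - ε ^ q * ∑ k ∈ range (m + 1), 1 / t k ^ q ≤ 0) {k : ℕ} (hk : k < n) :
    t k * worstCoeff q ε t m k ≤ ε := by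
  rcases lt_trichotomy k m with hkm | rfl | hkm
  · rw [worstCoeff_of_lt hkm, mul_div_cancel₀ _ (htpos k).ne']
  · have htk : 0 < t k ^ q := Real.rpow_pos_of_pos (htpos k) q
    have hrest := hnext hk
    rw [sum_range_succ, mul_add] at hrest
    have hpow : (t k * worstCoeff q ε t k k) ^ q ≤ ε ^ q := calc
      _ = t k ^ q * (1 - ε ^ q * ∑ j ∈ range k, 1 / t j ^ q) := by
        rw [Real.mul_rpow (htpos k).le (worstCoeff_nonneg hε htpos hS k),
          worstCoeff_self_rpow hq.ne' hS]
      _ ≤ t k ^ q * (ε ^ q * (1 / t k ^ q)) := by gcongr; linarith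
      _ = ε ^ q := by field_simp
    exact (Real.rpow_le_rpow_iff (mul_nonneg (htpos k).le (worstCoeff_nonneg hε htpos hS k))
      hε hq).1 hpow
  · rw [worstCoeff_eq_zero hkm, mul_zero]
    exact hε

lemma norm_worstCase (hε : 0 ≤ ε) (htpos : ∀ k, 0 < t k)
    (hS : 0 ≤ 1 - ε ^ q * ∑ k ∈ range m, 1 / t k ^ q) (k : ℕ) :
    ‖worstCase q ε t m k‖ = t k * worstCoeff q ε t m k := by
  rw [worstCase, Complex.norm_real,
    Real.norm_of_nonneg (mul_nonneg (htpos k).le (worstCoeff_nonneg hε htpos hS k))]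

lemma worstCase_mem_WT (hq : 0 < q) (hε : 0 ≤ ε) (htpos : ∀ k, 0 < t k)
    (hS : 0 ≤ 1 - ε ^ q * ∑ k ∈ range m, 1 / t k ^ q) :
    worstCase q ε t m ∈ WT q t := by
  refine ⟨fun k => (worstCoeff q ε t m k : ℂ), fun k => by simp [worstCase], ?_⟩
  have hnorm : ∀ k, ‖(worstCoeff q ε t m k : ℂ)‖ = worstCoeff q ε t m k := fun k => by
    rw [Complex.norm_real, Real.norm_of_nonneg (worstCoeff_nonneg hε htpos hS k)]
  have hsum : ∑' k, ENNReal.ofReal (‖(worstCoeff q ε t m k : ℂ)‖ ^ q) = ENNReal.ofReal 1 := by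
    simp only [hnorm]
    rw [tsum_ofReal_eq_sum (s := range (m + 1))
      (fun k _ => Real.rpow_nonneg (worstCoeff_nonneg hε htpos hS k) q)
      (fun k hk => by
        rw [worstCoeff_eq_zero (by simpa [Nat.lt_succ_iff] using hk), Real.zero_rpow hq.ne']),
      sum_worstCoeff_rpow hq.ne' hε htpos hS]
  simpa using (lqNorm_eq_ofReal_rpow hq zero_le_one hsum).le

lemma lqNorm_worstCase (hq : 0 < q) (hε : 0 ≤ ε) (htpos : ∀ k, 0 < t k)
    (hS : 0 ≤ 1 - ε ^ q * ∑ k ∈ range m, 1 / t k ^ q) :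
    lqNorm q (worstCase q ε t m) =
      ENNReal.ofReal ((t m ^ q + ε ^ q * ∑ k ∈ range m, (1 - t m ^ q / t k ^ q)) ^ (1 / q)) := by
  refine lqNorm_eq_ofReal_rpow hq ?_ ?_
  · rw [← sum_mul_worstCoeff_rpow hq.ne' hε htpos hS]
    exact sum_nonneg fun k _ =>
      Real.rpow_nonneg (mul_nonneg (htpos k).le (worstCoeff_nonneg hε htpos hS k)) q
  simp only [norm_worstCase hε htpos hS]
  rw [tsum_ofReal_eq_sum (s := range (m + 1))
    (fun k _ => Real.rpow_nonneg (mul_nonneg (htpos k).le (worstCoeff_nonneg hε htpos hS k)) q)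
    (fun k hk => by
      rw [worstCoeff_eq_zero (by simpa [Nat.lt_succ_iff] using hk), mul_zero,
        Real.zero_rpow hq.ne']),
    sum_mul_worstCoeff_rpow hq.ne' hε htpos hS]

end WorstCase

theorem optimal_recovery_sup_error_general
    (n : ℕ) (q : ℝ) (hq : 1 ≤ q)
    (t : ℕ → ℝ) (htpos : ∀ k, 0 < t k) (htmono : Antitone t)
    (ε : ℝ) (hε : 0 ≤ ε) (m : ℕ)
    (hm : (1 - ε ^ q * ∑ k ∈ Finset.range n, 1 / t k ^ q ≥ 0 ∧ m = n) ∨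
      (m ≤ n ∧ 1 - ε ^ q * ∑ k ∈ Finset.range m, 1 / t k ^ q ≥ 0 ∧
        1 - ε ^ q * ∑ k ∈ Finset.range (m + 1), 1 / t k ^ q < 0)) :
    optErr q (WT q t) (infoSup n ε) =
      recErr q (WT q t) (infoSup n ε) (PhiStar q t n m) ∧
    recErr q (WT q t) (infoSup n ε) (PhiStar q t n m) =
      ENNReal.ofReal
        ((t m ^ q + ε ^ q * ∑ k ∈ Finset.range m, (1 - t m ^ q / t k ^ q)) ^ (1 / q)) := by
  have hq0 : 0 < q := one_pos.trans_le hq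
  obtain ⟨hmn, hS, hnext⟩ : m ≤ n ∧ 0 ≤ 1 - ε ^ q * ∑ k ∈ range m, 1 / t k ^ q ∧
      (m < n → 1 - ε ^ q * ∑ k ∈ range (m + 1), 1 / t k ^ q ≤ 0) := by
    rcases hm with ⟨hS, rfl⟩ | ⟨hmn, hS, hnext⟩
    exacts [⟨le_rfl, hS, fun h => absurd h (lt_irrefl m)⟩, ⟨hmn, hS, fun _ => hnext.le⟩]
  refine optErr_eq_recErr_of_le (recErr_PhiStar_le hq htpos htmono hε hmn) fun Φ => ?_
  have hx := worstCase_mem_WT hq0 hε htpos hS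
  have hsmall : ∀ k < n, ‖worstCase q ε t m k‖ ≤ ε := fun k hk => by
    rw [norm_worstCase hε htpos hS]
    exact mul_worstCoeff_le hq0 hε htpos hS hnext hk
  rw [← lqNorm_worstCase hq0 hε htpos hS]
  exact lqNorm_le_recErr hq hx (neg_mem_WT hx) (zero_mem_infoSup hsmall)
    (zero_mem_infoSup fun k hk => by simpa using hsmall k hk) Φ

/-- Theorem 2: optimal recovery of `W^T_q` from the first `n` coordinates
known with an error measured in `ℓ^n_∞`. -/
theorem optimal_recovery_sup_error
    (n : ℕ) (hn : 1 ≤ n) (q : ℝ) (hq : 1 ≤ q)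
    (t : ℕ → ℝ) (htpos : ∀ k, 0 < t k) (htmono : Antitone t)
    (ε : ℝ) (hε : 0 ≤ ε) (m : ℕ)
    (hm : (1 - ε ^ q * ∑ k ∈ Finset.range n, 1 / t k ^ q ≥ 0 ∧ m = n) ∨
      (m ≤ n ∧ 1 - ε ^ q * ∑ k ∈ Finset.range m, 1 / t k ^ q ≥ 0 ∧
        1 - ε ^ q * ∑ k ∈ Finset.range (m + 1), 1 / t k ^ q < 0)) :
    optErr q (WT q t) (infoSup n ε) =
      recErr q (WT q t) (infoSup n ε) (PhiStar q t n m) ∧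
    recErr q (WT q t) (infoSup n ε) (PhiStar q t n m) =
      ENNReal.ofReal
        ((t m ^ q + ε ^ q * ∑ k ∈ Finset.range m, (1 - t m ^ q / t k ^ q)) ^ (1 / q)) :=
  optimal_recovery_sup_error_general n q hq t htpos htmono ε hε m hm
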